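/- arXiv:0907.5089 — 2 statements merged into one kernel-verified Lean document; each statement's English description precedes it below -/
import Mathlib

section
/- Let p ≠ 5 be a prime with p ≢ 1 (mod 5), let T be a generator of the group of characters on 𝔽_p, and let N_p denote the number of points in ℙ^4(𝔽_p) on x_0^5+x_1^5+x_2^5+x_3^5+x_4^5−5x_0x_1x_2x_3x_4=0. Then p·N_p = p^4 + p^3 + p^2 + p + 1 + (1/(p−1))·Σ_{e=0}^{p−2} G_{−e}^5 · G_{5e} · T^{−5e}(−5). -/
open Finset

/-- The standard additive character `θ(a) = e^{2πia/p}` on `𝔽_p`. -/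
noncomputable def theta (p : ℕ) (a : ZMod p) : ℂ :=
  Complex.exp (2 * Real.pi * Complex.I * (ZMod.val a : ℂ) / (p : ℂ))

/-- The Gauss sum `G(χ) = ∑_{x ∈ 𝔽_p} χ(x) θ(x)`. -/
noncomputable def gaussS (p : ℕ) [NeZero p] (χ : MulChar (ZMod p) ℂ) : ℂ :=
  ∑ x : ZMod p, χ x * theta p x

/-- The generalized Jacobi sum `J(χ₁,χ₂,χ₃) = ∑_{t₁+t₂+t₃=1} χ₁(t₁)χ₂(t₂)χ₃(t₃)`. -/
noncomputable def jacobi3 (p : ℕ) [NeZero p] (χ₁ χ₂ χ₃ : MulChar (ZMod p) ℂ) : ℂ :=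
  ∑ v ∈ Finset.univ.filter (fun v : ZMod p × ZMod p × ZMod p => v.1 + v.2.1 + v.2.2 = 1),
    χ₁ v.1 * χ₂ v.2.1 * χ₃ v.2.2


/-- The quintic `x₀⁵+x₁⁵+x₂⁵+x₃⁵+x₄⁵ - 5x₀x₁x₂x₃x₄` evaluated on a vector over `𝔽_p`. -/
def quinticF (p : ℕ) (x : Fin 5 → ZMod p) : ZMod p :=
  (∑ i, x i ^ 5) - 5 * ∏ i, x i

/-- The number of points in `ℙ⁴(𝔽_p)` on the Dwork quintic. -/
noncomputable def Np (p : ℕ) [Fact p.Prime] : ℕ :=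
  Nat.card {v : Projectivization (ZMod p) (Fin 5 → ZMod p) // quinticF p v.rep = 0}

/-!
Since `p ≢ 1 (mod 5)`, `t ↦ t⁵` is a bijection of `𝔽_p`. Detecting zeros with `θ` and using
homogeneity gives `p · #{F = 0} = p⁵ + (p - 1) ∑ₓ θ(F x)` on the affine cone over the quintic, and
the vectors with a zero coordinate contribute exactly `1` to `∑ₓ θ(F x)`, because
`∑ₜ θ(t⁵) = 0` and `∑_{t ≠ 0} θ(t⁵) = -1`. On the torus `∏ zᵢ ≠ 0`, write `G_{-e}` with the
substitution `x = z⁵` and expand `G_{-e}⁵ G_{5e}` as a sum over `(z, y)`: the character values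
combine to `T^e((y / (-5 ∏ zᵢ))⁵)`, so orthogonality of the powers of the generator `T` keeps
only `y = -5 ∏ zᵢ`, where `θ(∑ zᵢ⁵) θ(y) = θ(F z)`.
-/

theorem Projectivization.card_subtype_ne_zero_and {k V : Type*} [DivisionRing k]
    [AddCommGroup V] [Module k V] (Z : V → Prop) (hZ : ∀ (c : kˣ) (v : V), Z (c • v) ↔ Z v) :
    Nat.card {v : V // v ≠ 0 ∧ Z v} =
      Nat.card {x : Projectivization k V // Z x.rep} * (Nat.card k - 1) := by
  have hrep (v : {v : V // v ≠ 0}) : Z v ↔ Z (mk k v.1 v.2).rep := by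
    obtain ⟨c, hc⟩ := exists_smul_eq_mk_rep k v.1 v.2
    rw [← hc, hZ]
  calc Nat.card {v : V // v ≠ 0 ∧ Z v}
      = Nat.card {v : {v : V // v ≠ 0} // Z v} :=
        Nat.card_congr (Equiv.subtypeSubtypeEquivSubtypeInter _ Z).symm
    _ = Nat.card {s : Projectivization k V × kˣ // Z s.1.rep} :=
        Nat.card_congr ((nonZeroEquivProjectivizationProdUnits k V).subtypeEquiv hrep)
    _ = Nat.card {x : Projectivization k V // Z x.rep} * (Nat.card k - 1) := by
        rw [Nat.card_congr (Equiv.prodSubtypeFstEquivSubtypeProd (β := kˣ)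
          (p := fun x : Projectivization k V => Z x.rep)), Nat.card_prod, Nat.card_units]

theorem MulChar.apply_eq_one_iff_of_forall_eq_pow {M : Type*} [CommMonoid M] [Finite M]
    {T : MulChar M ℂ} (hT : ∀ χ : MulChar M ℂ, ∃ n : ℕ, χ = T ^ n) {a : M} :
    T a = 1 ↔ a = 1 := by
  refine ⟨fun h => ?_, fun h => h ▸ map_one T⟩
  by_contra ha
  have hu : IsUnit a := by_contra fun hu => by simp [map_nonunit T hu] at h
  have : NeZero ((Monoid.exponent Mˣ : ℕ) : ℂ) :=
    ⟨Nat.cast_ne_zero.mpr Monoid.exponent_ne_zero_of_finite⟩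
  obtain ⟨χ, hχ⟩ := exists_apply_ne_one_of_hasEnoughRootsOfUnity M ℂ ha
  obtain ⟨n, rfl⟩ := hT χ
  exact hχ (by rw [← hu.unit_spec, pow_apply_coe, hu.unit_spec, h, one_pow])

section FiniteField

variable {F : Type*} [Field F] [Fintype F]

theorem FiniteField.pow_bijective_of_coprime {n : ℕ} (hn : n ≠ 0)
    (hcop : n.Coprime (Fintype.card F - 1)) : Function.Bijective fun t : F => t ^ n := by
  refine Finite.injective_iff_bijective.mp fun a b (hab : a ^ n = b ^ n) => ?_
  rcases eq_or_ne a 0 with rfl | ha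
  · exact ((pow_eq_zero_iff hn).mp (by rw [← hab, zero_pow hn])).symm
  rcases eq_or_ne b 0 with rfl | hb
  · exact (pow_eq_zero_iff hn).mp (by rw [hab, zero_pow hn])
  have hunits : (Nat.card Fˣ).Coprime n := by
    rwa [Nat.card_units, Nat.card_eq_fintype_card, Nat.coprime_comm]
  have := hunits.pow_left_bijective.injective (a₁ := Units.mk0 a ha) (a₂ := Units.mk0 b hb)
    (Units.ext (by simpa using hab))
  simpa using congrArg Units.val this

theorem MulChar.sum_range_pow_apply [DecidableEq F] {T : MulChar F ℂ}
    (hT : ∀ χ : MulChar F ℂ, ∃ n : ℕ, χ = T ^ n) (u : F) :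
    ∑ e ∈ range (Fintype.card F - 1), (T ^ e) u =
      if u = 1 then (Fintype.card F : ℂ) - 1 else 0 := by
  rcases eq_or_ne u 0 with rfl | hu
  · simp
  have hpow (e : ℕ) : (T ^ e) u = T u ^ e := by
    simpa using MulChar.pow_apply_coe T e (Units.mk0 u hu)
  simp_rw [hpow]
  split_ifs with h1
  · simp [h1, Nat.cast_sub Fintype.card_pos]
  · rw [geom_sum_eq (mt (MulChar.apply_eq_one_iff_of_forall_eq_pow hT).mp h1), ← map_pow,
      FiniteField.pow_card_sub_one_eq_one u hu, map_one, sub_self, zero_div]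

theorem MulChar.sum_range_zpow_apply_pow [DecidableEq F] {T : MulChar F ℂ}
    (hT : ∀ χ : MulChar F ℂ, ∃ n : ℕ, χ = T ^ n) {n : ℕ} (hn : n ≠ 0)
    (hinj : Function.Injective fun t : F => t ^ n) (a c y : F) :
    ∑ e ∈ range (Fintype.card F - 1),
        (T ^ (-(e : ℤ))) (a ^ n) * (T ^ (n * e)) y * (T ^ (-(n : ℤ) * e)) c =
      if y = c * a ∧ c * a ≠ 0 then (Fintype.card F : ℂ) - 1 else 0 := by
  have hpow (e : ℕ) (b : F) : (T ^ (n * e)) b = (T ^ e) (b ^ n) := by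
    rw [pow_mul', MulChar.pow_apply' _ hn, map_pow]
  have hterm (e : ℕ) : (T ^ (-(e : ℤ))) (a ^ n) * (T ^ (n * e)) y * (T ^ (-(n : ℤ) * e)) c =
      (T ^ e) ((y * (c * a)⁻¹) ^ n) := by
    rw [neg_mul, zpow_neg, zpow_neg, zpow_natCast, ← Nat.cast_mul, zpow_natCast,
      MulChar.inv_apply', MulChar.inv_apply', hpow, hpow, ← map_mul, ← map_mul]
    congr 1
    rw [mul_inv, mul_pow, mul_pow, inv_pow, inv_pow]
    ring
  have hone (w : F) : w ^ n = 1 ↔ w = 1 := by rw [← one_pow n, hinj.eq_iff, one_pow]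
  have hunit : y * (c * a)⁻¹ = 1 ↔ y = c * a ∧ c * a ≠ 0 := by
    rcases eq_or_ne (c * a) 0 with h | h
    · simp [h]
    · rw [mul_inv_eq_one₀ h, and_iff_left h]
  simp_rw [hterm, MulChar.sum_range_pow_apply hT, hone, hunit]

end FiniteField

section Theta

variable {p : ℕ}

theorem theta_eq_stdAddChar [NeZero p] (a : ZMod p) : theta p a = ZMod.stdAddChar a := by
  rw [ZMod.stdAddChar_apply, ZMod.toCircle_apply]
  rfl

theorem theta_zero [NeZero p] : theta p 0 = 1 := by
  simp [theta_eq_stdAddChar]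

theorem theta_add [NeZero p] (a b : ZMod p) : theta p (a + b) = theta p a * theta p b := by
  simp only [theta_eq_stdAddChar, AddChar.map_add_eq_mul]

theorem theta_sum [NeZero p] {ι : Type*} (s : Finset ι) (f : ι → ZMod p) :
    theta p (∑ i ∈ s, f i) = ∏ i ∈ s, theta p (f i) := by
  classical
  induction s using Finset.cons_induction with
  | empty => simp [theta_zero]
  | cons a s ha ih => rw [sum_cons, prod_cons, theta_add, ih]

theorem sum_theta_mul [NeZero p] (t : ZMod p) :
    ∑ y : ZMod p, theta p (y * t) = if t = 0 then (p : ℂ) else 0 := by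
  simp only [theta_eq_stdAddChar]
  rw [AddChar.sum_mulShift t (ZMod.isPrimitive_stdAddChar p)]
  simp [ZMod.card]

theorem sum_theta [Fact p.Prime] : ∑ y : ZMod p, theta p y = 0 := by
  simpa using sum_theta_mul (p := p) 1

theorem sum_theta_pow [Fact p.Prime] {n : ℕ}
    (hbij : Function.Bijective fun t : ZMod p => t ^ n) : ∑ t : ZMod p, theta p (t ^ n) = 0 := by
  rw [hbij.sum_comp (theta p), sum_theta]

theorem sum_ite_ne_zero_theta_pow [Fact p.Prime] {n : ℕ} (hn : n ≠ 0)
    (hbij : Function.Bijective fun t : ZMod p => t ^ n) :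
    ∑ t : ZMod p, (if t ≠ 0 then theta p (t ^ n) else 0) = -1 := by
  calc ∑ t : ZMod p, (if t ≠ 0 then theta p (t ^ n) else 0)
      = ∑ t : ZMod p, (if t ^ n ≠ 0 then theta p (t ^ n) else 0) := by
        simp only [pow_ne_zero_iff hn]
    _ = ∑ s : ZMod p, (if s ≠ 0 then theta p s else 0) :=
        hbij.sum_comp fun s => if s ≠ 0 then theta p s else 0
    _ = -1 := by
        rw [sum_ite, sum_const_zero, add_zero, filter_ne' univ 0,
          sum_erase_eq_sub (mem_univ 0), sum_theta, theta_zero, zero_sub]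

theorem gaussS_pow_eq_sum [NeZero p] {n : ℕ} (hbij : Function.Bijective fun t : ZMod p => t ^ n)
    (χ : MulChar (ZMod p) ℂ) :
    gaussS p χ ^ n = ∑ z : Fin n → ZMod p, χ ((∏ i, z i) ^ n) * theta p (∑ i, z i ^ n) := by
  rw [gaussS, ← hbij.sum_comp (fun x => χ x * theta p x), Fintype.sum_pow]
  refine sum_congr rfl fun z _ => ?_
  rw [prod_mul_distrib, ← map_prod, prod_pow, ← theta_sum]

end Theta

section Quintic

variable {p : ℕ}

theorem quinticF_smul (c : ZMod p) (x : Fin 5 → ZMod p) :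
    quinticF p (c • x) = c ^ 5 * quinticF p x := by
  simp only [quinticF, Pi.smul_apply, smul_eq_mul, mul_pow, ← mul_sum, prod_mul_distrib,
    prod_const, card_univ, Fintype.card_fin]
  ring

theorem card_quinticF_eq_zero [Fact p.Prime] :
    Nat.card {x : Fin 5 → ZMod p // quinticF p x = 0} = Np p * (p - 1) + 1 := by
  have hsplit : {x : Fin 5 → ZMod p | quinticF p x = 0} =
      insert 0 {x | x ≠ 0 ∧ quinticF p x = 0} := by
    ext x
    by_cases hx : x = 0 <;> simp [hx, quinticF]
  have hcone := Projectivization.card_subtype_ne_zero_and (k := ZMod p)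
    (fun x : Fin 5 → ZMod p => quinticF p x = 0)
    fun c x => by simp [Units.smul_def, quinticF_smul]
  change Nat.card {x | quinticF p x = 0} = _
  rw [Nat.card_coe_set_eq, hsplit, Set.ncard_insert_of_notMem (by simp) (Set.toFinite _),
    ← Nat.card_coe_set_eq]
  rw [Nat.card_zmod] at hcone
  exact congrArg (· + 1) hcone

theorem mul_card_quinticF_eq_zero [Fact p.Prime]
    (hbij : Function.Bijective fun t : ZMod p => t ^ 5) :
    (p : ℂ) * Nat.card {x : Fin 5 → ZMod p // quinticF p x = 0} =
      (p : ℂ) ^ 5 + ((p : ℂ) - 1) * ∑ x : Fin 5 → ZMod p, theta p (quinticF p x) := by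
  have hscale (y : ZMod p) (hy : y ≠ 0) :
      ∑ x : Fin 5 → ZMod p, theta p (y ^ 5 * quinticF p x) =
        ∑ x : Fin 5 → ZMod p, theta p (quinticF p x) := by
    simpa [Units.smul_def, quinticF_smul] using
      (MulAction.bijective (Units.mk0 y hy)).sum_comp fun x => theta p (quinticF p x)
  calc (p : ℂ) * Nat.card {x : Fin 5 → ZMod p // quinticF p x = 0}
      = ∑ x : Fin 5 → ZMod p, ∑ y : ZMod p, theta p (y * quinticF p x) := by
        simp_rw [sum_theta_mul]
        rw [sum_ite, sum_const_zero, add_zero, sum_const, nsmul_eq_mul,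
          Nat.card_eq_fintype_card, Fintype.card_subtype, mul_comm]
    _ = ∑ y : ZMod p, ∑ x : Fin 5 → ZMod p, theta p (y ^ 5 * quinticF p x) := by
        rw [sum_comm, hbij.sum_comp fun y => ∑ x, theta p (y * quinticF p x)]
    _ = (p : ℂ) ^ 5 + ((p : ℂ) - 1) * ∑ x : Fin 5 → ZMod p, theta p (quinticF p x) := by
        rw [← add_sum_erase _ _ (mem_univ 0),
          sum_congr rfl fun y hy => hscale y (ne_of_mem_erase hy), sum_const,
          card_erase_of_mem (mem_univ 0), card_univ, ZMod.card, nsmul_eq_mul,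
          Nat.cast_pred (Fact.out : p.Prime).pos]
        simp [theta_zero]

theorem sum_theta_quinticF [Fact p.Prime] (hbij : Function.Bijective fun t : ZMod p => t ^ 5) :
    ∑ x : Fin 5 → ZMod p, theta p (quinticF p x) =
      (∑ x : Fin 5 → ZMod p, if ∏ i, x i ≠ 0 then theta p (quinticF p x) else 0) + 1 := by
  have hsplit (x : Fin 5 → ZMod p) : theta p (quinticF p x) =
      (if ∏ i, x i ≠ 0 then theta p (quinticF p x) else 0) +
        (theta p (∑ i, x i ^ 5) - if ∏ i, x i ≠ 0 then theta p (∑ i, x i ^ 5) else 0) := by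
    by_cases hx : ∏ i, x i = 0 <;> simp [hx, quinticF]
  have hall : ∑ x : Fin 5 → ZMod p, theta p (∑ i, x i ^ 5) = 0 := by
    calc ∑ x : Fin 5 → ZMod p, theta p (∑ i, x i ^ 5)
        = ∑ x : Fin 5 → ZMod p, ∏ i, theta p (x i ^ 5) := by simp only [theta_sum]
      _ = (∑ t : ZMod p, theta p (t ^ 5)) ^ 5 :=
          (Fintype.sum_pow (fun t => theta p (t ^ 5)) 5).symm
      _ = 0 := by rw [sum_theta_pow hbij, zero_pow (by norm_num)]
  have hunits : ∑ x : Fin 5 → ZMod p, (if ∏ i, x i ≠ 0 then theta p (∑ i, x i ^ 5) else 0) =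
      -1 := by
    calc ∑ x : Fin 5 → ZMod p, (if ∏ i, x i ≠ 0 then theta p (∑ i, x i ^ 5) else 0)
        = ∑ x : Fin 5 → ZMod p, ∏ i, (if x i ≠ 0 then theta p (x i ^ 5) else 0) := by
          refine sum_congr rfl fun x _ => ?_
          rw [Fintype.prod_ite_zero, theta_sum]
          split_ifs <;> simp_all [prod_ne_zero_iff]
      _ = (∑ t : ZMod p, if t ≠ 0 then theta p (t ^ 5) else 0) ^ 5 :=
          (Fintype.sum_pow (fun t => if t ≠ 0 then theta p (t ^ 5) else 0) 5).symm
      _ = -1 := by rw [sum_ite_ne_zero_theta_pow (by norm_num) hbij]; norm_num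
  rw [sum_congr rfl fun x _ => hsplit x, sum_add_distrib, sum_sub_distrib, hall, hunits]
  ring

theorem sum_gaussS_eq_sum_theta_quinticF [Fact p.Prime] (hp5 : p ≠ 5)
    {T : MulChar (ZMod p) ℂ} (hT : ∀ χ : MulChar (ZMod p) ℂ, ∃ n : ℕ, χ = T ^ n)
    (hbij : Function.Bijective fun t : ZMod p => t ^ 5) :
    ∑ e ∈ range (p - 1), gaussS p (T ^ (-(e : ℤ))) ^ 5 * gaussS p (T ^ (5 * e)) *
        (T ^ (-5 * (e : ℤ))) (-5 : ZMod p) =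
      ((p : ℂ) - 1) *
        ∑ z : Fin 5 → ZMod p, if ∏ i, z i ≠ 0 then theta p (quinticF p z) else 0 := by
  have h5 : (-5 : ZMod p) ≠ 0 := by
    rw [neg_ne_zero, ← Nat.cast_ofNat, ne_eq, ZMod.natCast_eq_zero_iff,
      Nat.prime_dvd_prime_iff_eq Fact.out Nat.prime_five]
    exact hp5
  have htwist (a y : ZMod p) : ∑ e ∈ range (p - 1),
      (T ^ (-(e : ℤ))) (a ^ 5) * (T ^ (5 * e)) y * (T ^ (-5 * (e : ℤ))) (-5 : ZMod p) =
        if y = -5 * a ∧ a ≠ 0 then (p : ℂ) - 1 else 0 := by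
    have := MulChar.sum_range_zpow_apply_pow hT (n := 5) (by norm_num) hbij.injective a (-5) y
    simpa only [Nat.cast_ofNat, ZMod.card, mul_ne_zero_iff, ne_eq, h5, not_false_eq_true,
      true_and] using this
  calc ∑ e ∈ range (p - 1), gaussS p (T ^ (-(e : ℤ))) ^ 5 * gaussS p (T ^ (5 * e)) *
        (T ^ (-5 * (e : ℤ))) (-5 : ZMod p)
      = ∑ e ∈ range (p - 1), ∑ z : Fin 5 → ZMod p, ∑ y : ZMod p,
          theta p (∑ i, z i ^ 5) * theta p y * ((T ^ (-(e : ℤ))) ((∏ i, z i) ^ 5) *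
            (T ^ (5 * e)) y * (T ^ (-5 * (e : ℤ))) (-5 : ZMod p)) := by
        refine sum_congr rfl fun e _ => ?_
        rw [gaussS_pow_eq_sum hbij, gaussS, sum_mul_sum, sum_mul]
        refine sum_congr rfl fun z _ => ?_
        rw [sum_mul]
        exact sum_congr rfl fun y _ => by ring
    _ = ∑ z : Fin 5 → ZMod p, ∑ y : ZMod p, theta p (∑ i, z i ^ 5) * theta p y *
          if y = -5 * ∏ i, z i ∧ ∏ i, z i ≠ 0 then (p : ℂ) - 1 else 0 := by
        rw [sum_comm]
        refine sum_congr rfl fun z _ => ?_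
        rw [sum_comm]
        simp_rw [← mul_sum, htwist]
    _ = ((p : ℂ) - 1) * ∑ z : Fin 5 → ZMod p,
          if ∏ i, z i ≠ 0 then theta p (quinticF p z) else 0 := by
        rw [mul_sum]
        refine sum_congr rfl fun z _ => ?_
        by_cases hz : ∏ i, z i = 0
        · simp [hz]
        · simp only [ne_eq, hz, not_false_eq_true, and_true, if_true, mul_ite, mul_zero,
            sum_ite_eq', mem_univ]
          rw [quinticF, sub_eq_add_neg (∑ i, z i ^ 5), theta_add, ← neg_mul]
          ring

end Quintic

/-- Point-count formula for the Dwork quintic via Gauss sums, `p ≢ 1 (mod 5)` case. -/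
theorem point_count_gauss_not_one (p : ℕ) [Fact p.Prime] (hp5 : p ≠ 5)
    (hp1 : p % 5 ≠ 1)
    (T : MulChar (ZMod p) ℂ) (hT : ∀ χ : MulChar (ZMod p) ℂ, ∃ n : ℕ, χ = T ^ n) :
    (p : ℂ) * (Np p : ℂ) =
      (p : ℂ) ^ 4 + (p : ℂ) ^ 3 + (p : ℂ) ^ 2 + (p : ℂ) + 1 +
        (1 / ((p : ℂ) - 1)) * ∑ e ∈ Finset.range (p - 1),
          (gaussS p (T ^ (-(e : ℤ)))) ^ 5 * gaussS p (T ^ (5 * e)) *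
            (T ^ (-5 * (e : ℤ))) (-5 : ZMod p) := by
  have hp : p.Prime := Fact.out
  have hbij : Function.Bijective fun t : ZMod p => t ^ 5 := by
    refine FiniteField.pow_bijective_of_coprime (by norm_num) ?_
    rw [ZMod.card, Nat.Prime.coprime_iff_not_dvd Nat.prime_five]
    have := hp.one_le
    omega
  have hpne : (p : ℂ) - 1 ≠ 0 := sub_ne_zero.mpr (by exact_mod_cast hp.one_lt.ne')
  have hcount := mul_card_quinticF_eq_zero hbij
  rw [card_quinticF_eq_zero, sum_theta_quinticF hbij] at hcount
  push_cast [hp.one_le] at hcount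
  rw [sum_gaussS_eq_sum_theta_quinticF hp5 hT hbij, one_div, inv_mul_cancel_left₀ hpne]
  refine mul_left_cancel₀ hpne ?_
  linear_combination hcount
end

section
/- Let p be a prime with p ≡ 1 (mod 5), set t = (p−1)/5, and let T be a generator of the group of characters on 𝔽_p. Then Σ_{i=0}^{4} Σ_{j=0}^{4} G_{(i+j)t} · G_{−it} · G_{−jt} = −1 − 12p − 3p · Σ_{k=1}^{4} J(T^{kt}, T^{2kt}, T^{2kt}). -/
open Finset

/-!
Put `χ = T ^ t`, a character of order `5`, and `g k = G(χ^k)`. Every term of the double sum is a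
product `g a * g b * g c` with `a + b + c ≡ 0 (mod 5)`. The thirteen terms with an exponent
`≡ 0` are evaluated by `G(ε) = -1` and `G(χ^k) G(χ^-k) = χ^k(-1) p = p` (odd order); they give
`-1 - 12p`. The other twelve are the three arrangements of each exponent pattern `{k, 2k, 2k}`,
`k = 1, …, 4`, and `G(χ₁) G(χ₂) G(χ₃) = -p J(χ₁, χ₂, χ₃)` whenever `χ₁ χ₂ χ₃ = ε ≠ χ₁`: the
sums `∑_{x+y+z=s} χ₁(x) χ₂(y) χ₃(z)` do not depend on `s ≠ 0` and add up to `0` over all `s`.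
-/

section FiniteField

variable {F R : Type*} [Field F] [Fintype F] [CommRing R]

theorem gaussSum_mul_gaussSum_inv [IsDomain R] {χ : MulChar F R} (hχ : χ ≠ 1)
    {ψ : AddChar F R} (hψ : ψ.IsPrimitive) :
    gaussSum χ ψ * gaussSum χ⁻¹ ψ = χ (-1) * Fintype.card F := by
  rw [← mul_gaussSum_inv_eq_gaussSum χ⁻¹, mul_left_comm, gaussSum_mul_gaussSum_eq_card hχ hψ,
    MulChar.inv_apply', inv_neg_one]

variable [DecidableEq F]

def tripleJacobiSum (χ₁ χ₂ χ₃ : MulChar F R) (s : F) : R :=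
  ∑ v ∈ univ.filter (fun v : F × F × F => v.1 + v.2.1 + v.2.2 = s), χ₁ v.1 * χ₂ v.2.1 * χ₃ v.2.2

variable {χ₁ χ₂ χ₃ : MulChar F R}

theorem tripleJacobiSum_eq_tripleJacobiSum_one (h : χ₁ * χ₂ * χ₃ = 1) {s : F} (hs : s ≠ 0) :
    tripleJacobiSum χ₁ χ₂ χ₃ s = tripleJacobiSum χ₁ χ₂ χ₃ 1 := by
  have hχs : χ₁ s * χ₂ s * χ₃ s = 1 := by
    rw [← MulChar.mul_apply, ← MulChar.mul_apply, h, MulChar.one_apply (Ne.isUnit hs)]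
  let e := Equiv.mulLeft₀ s hs
  rw [tripleJacobiSum, tripleJacobiSum, sum_filter, sum_filter]
  refine (Fintype.sum_equiv (e.prodCongr (e.prodCongr e)) _ _ fun v => ?_).symm
  simp only [e, Equiv.prodCongr_apply, Prod.map, Equiv.mulLeft₀_apply, map_mul, ← mul_add,
    mul_eq_left₀ hs]
  refine if_congr Iff.rfl ?_ rfl
  linear_combination (χ₁ v.1 * χ₂ v.2.1 * χ₃ v.2.2) * hχs.symm

theorem sum_tripleJacobiSum_mul (f : F → R) :
    ∑ s, tripleJacobiSum χ₁ χ₂ χ₃ s * f s = ∑ x, ∑ y, ∑ z, χ₁ x * χ₂ y * χ₃ z * f (x + y + z) := by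
  have hfiber (s : F) : tripleJacobiSum χ₁ χ₂ χ₃ s * f s = ∑ v ∈ univ.filter
      (fun v : F × F × F => v.1 + v.2.1 + v.2.2 = s),
      χ₁ v.1 * χ₂ v.2.1 * χ₃ v.2.2 * f (v.1 + v.2.1 + v.2.2) := by
    rw [tripleJacobiSum, sum_mul]
    exact sum_congr rfl fun v hv => by rw [(mem_filter.1 hv).2]
  simp only [hfiber, sum_fiberwise, Fintype.sum_prod_type]

theorem sum_tripleJacobiSum :
    ∑ s, tripleJacobiSum χ₁ χ₂ χ₃ s = (∑ x, χ₁ x) * ∑ y, ∑ z, χ₂ y * χ₃ z := by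
  have h := sum_tripleJacobiSum_mul (χ₁ := χ₁) (χ₂ := χ₂) (χ₃ := χ₃) fun _ => 1
  simp only [mul_one] at h
  rw [h, sum_mul]
  simp only [mul_sum, mul_assoc]

theorem gaussSum_mul_gaussSum_mul_gaussSum (ψ : AddChar F R) :
    gaussSum χ₁ ψ * gaussSum χ₂ ψ * gaussSum χ₃ ψ = ∑ s, tripleJacobiSum χ₁ χ₂ χ₃ s * ψ s := by
  rw [sum_tripleJacobiSum_mul, gaussSum, gaussSum, gaussSum, sum_mul_sum, sum_mul_sum]
  simp only [sum_mul, AddChar.map_add_eq_mul]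
  refine sum_congr rfl fun x _ => ?_
  rw [sum_comm]
  exact sum_congr rfl fun y _ => sum_congr rfl fun z _ => by ring

theorem gaussSum_mul_gaussSum_mul_gaussSum_eq [IsDomain R] (hχ₁ : χ₁ ≠ 1)
    (h : χ₁ * χ₂ * χ₃ = 1) {ψ : AddChar F R} (hψ : ψ ≠ 1) :
    gaussSum χ₁ ψ * gaussSum χ₂ ψ * gaussSum χ₃ ψ =
      -(Fintype.card F : R) * tripleJacobiSum χ₁ χ₂ χ₃ 1 := by
  have hsum : ∑ s, tripleJacobiSum χ₁ χ₂ χ₃ s = 0 := by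
    rw [sum_tripleJacobiSum, MulChar.sum_eq_zero_of_ne_one hχ₁, zero_mul]
  calc gaussSum χ₁ ψ * gaussSum χ₂ ψ * gaussSum χ₃ ψ
      = ∑ s, tripleJacobiSum χ₁ χ₂ χ₃ s * (ψ s - 1) := by
        rw [gaussSum_mul_gaussSum_mul_gaussSum]
        simp only [mul_sub, mul_one, sum_sub_distrib, hsum, sub_zero]
    _ = ∑ s, tripleJacobiSum χ₁ χ₂ χ₃ 1 * (ψ s - 1) := by
        refine sum_congr rfl fun s _ => ?_
        rcases eq_or_ne s 0 with rfl | hs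
        · simp
        · rw [tripleJacobiSum_eq_tripleJacobiSum_one h hs]
    _ = -(Fintype.card F : R) * tripleJacobiSum χ₁ χ₂ χ₃ 1 := by
        simp [← mul_sum, AddChar.sum_eq_zero_of_ne_one hψ, mul_comm]

end FiniteField

theorem MulChar.orderOf_eq_card_units {M : Type*} [CommMonoid M] [Finite M] {T : MulChar M ℂ}
    (hT : ∀ χ : MulChar M ℂ, ∃ n : ℕ, χ = T ^ n) : orderOf T = Nat.card Mˣ := by
  have : NeZero ((Monoid.exponent Mˣ : ℕ) : ℂ) :=
    ⟨Nat.cast_ne_zero.mpr Monoid.exponent_ne_zero_of_finite⟩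
  rw [orderOf_eq_card_of_forall_mem_zpowers fun χ => ?_,
    MulChar.card_eq_card_units_of_hasEnoughRootsOfUnity]
  obtain ⟨n, rfl⟩ := hT χ
  exact ⟨n, zpow_natCast T n⟩

section ZModGaussSum

variable {p : ℕ}

noncomputable def thetaChar (p : ℕ) [NeZero p] : AddChar (ZMod p) ℂ :=
  AddChar.zmodChar p (Complex.isPrimitiveRoot_exp p (NeZero.ne p)).pow_eq_one

theorem thetaChar_isPrimitive [NeZero p] : (thetaChar p).IsPrimitive :=
  AddChar.zmodChar_primitive_of_primitive_root p (Complex.isPrimitiveRoot_exp p (NeZero.ne p))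

theorem theta_eq_thetaChar [NeZero p] (a : ZMod p) : theta p a = thetaChar p a := by
  rw [theta, thetaChar, AddChar.zmodChar_apply, ← Complex.exp_nat_mul]
  ring_nf

theorem gaussS_eq_gaussSum [NeZero p] (χ : MulChar (ZMod p) ℂ) :
    gaussS p χ = gaussSum χ (thetaChar p) := by
  simp only [gaussS, gaussSum, theta_eq_thetaChar]

variable [Fact p.Prime]

theorem thetaChar_ne_one : thetaChar p ≠ 1 := by
  simpa using thetaChar_isPrimitive (p := p) one_ne_zero

theorem gaussS_one : gaussS p 1 = -1 := by
  rw [gaussS_eq_gaussSum, gaussSum_one_left thetaChar_ne_one]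

theorem gaussS_mul_gaussS_inv_of_odd {χ : MulChar (ZMod p) ℂ} (hχ : χ ≠ 1) {n : ℕ} (hn : Odd n)
    (hχn : χ ^ n = 1) : gaussS p χ * gaussS p χ⁻¹ = p := by
  rw [gaussS_eq_gaussSum, gaussS_eq_gaussSum, gaussSum_mul_gaussSum_inv hχ thetaChar_isPrimitive,
    MulChar.val_neg_one_eq_one_of_odd_order hn hχn, ZMod.card, one_mul]

theorem gaussS_mul_gaussS_mul_gaussS {χ₁ χ₂ χ₃ : MulChar (ZMod p) ℂ} (hχ₁ : χ₁ ≠ 1)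
    (h : χ₁ * χ₂ * χ₃ = 1) :
    gaussS p χ₁ * gaussS p χ₂ * gaussS p χ₃ = -p * jacobi3 p χ₁ χ₂ χ₃ := by
  simp only [gaussS_eq_gaussSum]
  rw [gaussSum_mul_gaussSum_mul_gaussSum_eq hχ₁ h thetaChar_ne_one, ZMod.card]
  rfl

theorem MulChar.orderOf_pow_eq_of_forall_eq_pow {T : MulChar (ZMod p) ℂ}
    (hT : ∀ χ : MulChar (ZMod p) ℂ, ∃ n : ℕ, χ = T ^ n) {t m : ℕ} (h : p - 1 = t * m) :
    orderOf (T ^ t) = m := by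
  have hTord : orderOf T = t * m := by
    rw [MulChar.orderOf_eq_card_units hT, Nat.card_eq_fintype_card, ZMod.card_units, h]
  have ht : t ≠ 0 := by
    rintro rfl
    have := (Fact.out : p.Prime).two_le
    omega
  rw [orderOf_pow_of_dvd ht (hTord ▸ dvd_mul_right t m), hTord,
    Nat.mul_div_cancel_left m (Nat.pos_of_ne_zero ht)]

theorem sum_gaussS_mul_of_orderOf_eq_five {χ : MulChar (ZMod p) ℂ}
    (hχ : orderOf χ = 5) :
    ∑ i ∈ range 5, ∑ j ∈ range 5,
      gaussS p (χ ^ (i + j)) * gaussS p (χ ^ i)⁻¹ * gaussS p (χ ^ j)⁻¹ =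
    -1 - 12 * (p : ℂ) -
      3 * (p : ℂ) * ∑ k ∈ Icc 1 4, jacobi3 p (χ ^ k) (χ ^ (2 * k)) (χ ^ (2 * k)) := by
  have hpow_five (k : ℕ) : χ ^ (5 * k) = 1 := by rw [pow_mul, ← hχ, pow_orderOf_eq_one, one_pow]
  have hne (k : ℕ) (hk : k % 5 ≠ 0) : χ ^ k ≠ 1 := by
    rwa [Ne, ← orderOf_dvd_iff_pow_eq_one, hχ, Nat.dvd_iff_mod_eq_zero]
  set g : ℕ → ℂ := fun n => gaussS p (χ ^ n)
  have hg (n : ℕ) : gaussS p (χ ^ n) = g (n % 5) := by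
    change _ = gaussS p (χ ^ (n % 5))
    rw [← hχ, pow_mod_orderOf]
  have hg_inv (n : ℕ) : gaussS p (χ ^ n)⁻¹ = g (4 * n % 5) := by
    rw [← hg, inv_eq_of_mul_eq_one_left (a := χ ^ (4 * n))]
    rw [← pow_add, show 4 * n + n = 5 * n by ring, hpow_five]
  have hpair (k : ℕ) (hk : k % 5 ≠ 0) : g (k % 5) * g (4 * k % 5) = p := by
    rw [← hg, ← hg_inv]
    refine gaussS_mul_gaussS_inv_of_odd (hne k hk) (by decide : Odd 5) ?_
    rw [← pow_mul, mul_comm, hpow_five]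
  have hjacobi (k : ℕ) (hk : k ∈ Icc 1 4) :
      (p : ℂ) * jacobi3 p (χ ^ k) (χ ^ (2 * k)) (χ ^ (2 * k)) =
        -(g (k % 5) * g (2 * k % 5) * g (2 * k % 5)) := by
    rw [← hg, ← hg, gaussS_mul_gaussS_mul_gaussS (hne k (by simp at hk; omega))]
    · ring
    · rw [← pow_add, ← pow_add, show k + 2 * k + 2 * k = 5 * k by ring, hpow_five]
  have h1 := hpair 1 (by norm_num)
  have h2 := hpair 2 (by norm_num)
  rw [mul_assoc, mul_sum, sum_congr rfl hjacobi, show Icc 1 4 = {1, 2, 3, 4} by rfl]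
  simp only [hg, hg_inv, sum_range_succ, sum_range_zero, zero_add]
  norm_num [g, pow_zero, gaussS_one] at h1 h2 ⊢
  linear_combination (-6 : ℂ) * h1 - 6 * h2

end ZModGaussSum

/-- Evaluation of the double Gauss-sum sum `B` (proof of Theorem 5.1 of McCarthy). -/
theorem gauss_double_sum (p : ℕ) [Fact p.Prime] (hp : p % 5 = 1)
    (t : ℕ) (ht : t = (p - 1) / 5)
    (T : MulChar (ZMod p) ℂ) (hT : ∀ χ : MulChar (ZMod p) ℂ, ∃ n : ℕ, χ = T ^ n) :
    ∑ i ∈ Finset.range 5, ∑ j ∈ Finset.range 5,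
      gaussS p (T ^ ((i + j) * t)) * gaussS p (T ^ (-(i : ℤ) * t)) *
        gaussS p (T ^ (-(j : ℤ) * t)) =
    -1 - 12 * (p : ℂ) -
      3 * (p : ℂ) * ∑ k ∈ Finset.Icc (1 : ℕ) 4,
        jacobi3 p (T ^ (k * t)) (T ^ (2 * k * t)) (T ^ (2 * k * t)) := by
  have hzpow (n : ℕ) : T ^ (-(n : ℤ) * t) = ((T ^ t) ^ n)⁻¹ := by
    rw [neg_mul, zpow_neg, mul_comm, zpow_mul, zpow_natCast, zpow_natCast]
  simp only [fun n : ℕ => pow_mul' T n t, hzpow]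
  exact sum_gaussS_mul_of_orderOf_eq_five (MulChar.orderOf_pow_eq_of_forall_eq_pow hT (by omega))
end
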